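/- arXiv:2301.06423 — 4 statements merged into one kernel-verified Lean document; each statement's English description precedes it below -/
import Mathlib

section
/- Let r ≥ 2 and let H be the complete r-partite graph with parts of sizes n_1, n_2, …, n_r ≥ 1 (so H has n = n_1 + ⋯ + n_r vertices). Then the r-clique spectral radius of H equals (n_1 n_2 ⋯ n_r)^{(r-1)/r}. -/
open Finset

/-- The finset of all `r`-cliques (sets of `r` pairwise adjacent vertices) of `G`. -/
noncomputable def rCliques {V : Type*} [Fintype V] [DecidableEq V]
    (G : SimpleGraph V) (r : ℕ) : Finset (Finset V) :=
  letI := Classical.decPred (fun K : Finset V => G.IsNClique r K)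
  Finset.univ.filter (fun K => G.IsNClique r K)

/-- The `r`-clique spectral radius of `G`: the supremum over nonnegative vectors `x`
with `∑ v, x v ^ r = 1` of `r * ∑_{K an r-clique} ∏_{i ∈ K} x i`. -/
noncomputable def cliqueSpecRad {V : Type*} [Fintype V] [DecidableEq V]
    (G : SimpleGraph V) (r : ℕ) : ℝ :=
  sSup { y : ℝ | ∃ x : V → ℝ, (∀ v, 0 ≤ x v) ∧ (∑ v, x v ^ r) = 1 ∧
    y = r * ∑ K ∈ rCliques G r, ∏ i ∈ K, x i }

private lemma aux_sigma_mk_fst {α : Type*} {β : α → Type*} (k : Σ a, β a) (i : α)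
    (h : k.1 = i) : (⟨i, h ▸ k.2⟩ : Σ a, β a) = k := by subst h; rfl

/-- The cliques of the complete multipartite graph are transversals, so the clique sum
factors as a product of part sums. -/
private lemma aux_clique_sum {r : ℕ} (m : Fin r → ℕ)
    (x : (Σ i : Fin r, Fin (m i)) → ℝ) :
    ∑ K ∈ rCliques (SimpleGraph.completeMultipartiteGraph (fun i : Fin r => Fin (m i))) r,
      ∏ v ∈ K, x v
      = ∏ i, ∑ a : Fin (m i), x ⟨i, a⟩ := by
  classical
  unfold rCliques
  rw [Finset.prod_univ_sum]
  rw [Fintype.piFinset_univ]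
  refine (Finset.sum_bij (fun p _ => Finset.univ.image fun i => (⟨i, p i⟩ : Σ i, Fin (m i)))
    ?_ ?_ ?_ ?_).symm
  · intro p _
    have hinj : Function.Injective (fun i => (⟨i, p i⟩ : Σ i, Fin (m i))) :=
      fun a b h => congrArg Sigma.fst h
    simp only [Finset.mem_filter, Finset.mem_univ, true_and]
    constructor
    · intro v hv w hw hvw
      simp only [Finset.coe_image, Set.mem_image] at hv hw
      obtain ⟨i, -, rfl⟩ := hv
      obtain ⟨j, -, rfl⟩ := hw
      have : i ≠ j := fun h => hvw (by subst h; rfl)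
      simpa using this
    · rw [Finset.card_image_of_injective _ hinj, Finset.card_univ, Fintype.card_fin]
  · intro p _ q _ h
    funext i
    have : (⟨i, p i⟩ : Σ i, Fin (m i)) ∈ Finset.univ.image
        fun j => (⟨j, q j⟩ : Σ i, Fin (m i)) := by
      rw [← h]; exact Finset.mem_image_of_mem _ (Finset.mem_univ i)
    obtain ⟨j, -, hj⟩ := Finset.mem_image.mp this
    obtain ⟨rfl, h2⟩ := Sigma.mk.inj_iff.mp hj
    exact (eq_of_heq h2).symm
  · intro K hK
    simp only [Finset.mem_filter, Finset.mem_univ, true_and] at hK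
    have hinjK : Set.InjOn Sigma.fst (K : Set (Σ i, Fin (m i))) := by
      intro a ha b hb hab
      by_contra hne
      exact (hK.1 ha hb hne) hab
    have himg : K.image Sigma.fst = Finset.univ := by
      apply Finset.eq_univ_of_card
      rw [Finset.card_image_of_injOn hinjK, hK.2, Fintype.card_fin]
    choose k hk1 hk2 using fun i : Fin r =>
      Finset.mem_image.mp (himg ▸ Finset.mem_univ i)
    refine ⟨fun i => (hk2 i) ▸ (k i).2, Finset.mem_univ _, ?_⟩
    apply Finset.eq_of_subset_of_card_le
    · intro v hv
      obtain ⟨i, -, rfl⟩ := Finset.mem_image.mp hv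
      rw [aux_sigma_mk_fst (k i) i (hk2 i)]
      exact hk1 i
    · rw [hK.2]
      rw [Finset.card_image_of_injective _ (fun a b h => congrArg Sigma.fst h : Function.Injective
        (fun i => (⟨i, (hk2 i) ▸ (k i).2⟩ : Σ i, Fin (m i))))]
      simp
  · intro p _
    exact (Finset.prod_image (fun a _ b _ h => congrArg Sigma.fst h)).symm

/-- Power-mean bound for one part. -/
private lemma aux_part_bound {r n : ℕ} (hr : 1 ≤ r) (hn : 1 ≤ n) (f : Fin n → ℝ)
    (hf : ∀ a, 0 ≤ f a) :
    ∑ a, f a ≤ (n : ℝ) ^ (((r : ℝ) - 1) / r) * (∑ a, f a ^ r) ^ ((1 : ℝ) / r) := by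
  have hr0 : (0:ℝ) < r := by exact_mod_cast hr
  have hn0 : (0:ℝ) < n := by exact_mod_cast hn
  have hS : (0:ℝ) ≤ ∑ a, f a := Finset.sum_nonneg fun a _ => hf a
  have ht : (0:ℝ) ≤ ∑ a, f a ^ r := Finset.sum_nonneg fun a _ => pow_nonneg (hf a) r
  have hpow : (∑ a, f a) ^ r ≤ (n : ℝ) ^ (r - 1) * ∑ a, f a ^ r := by
    have := pow_sum_div_card_le_sum_pow (s := Finset.univ) (f := f)
      (fun a _ => hf a) (r - 1)
    rw [Nat.sub_add_cancel hr] at this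
    rw [div_le_iff₀ (by simp [Finset.card_univ]; positivity)] at this
    simpa [Finset.card_univ, mul_comm] using this
  calc ∑ a, f a = ((∑ a, f a) ^ r) ^ ((1:ℝ)/r) := by
        rw [← Real.rpow_natCast (∑ a, f a) r, ← Real.rpow_mul hS]
        rw [mul_one_div, div_self (ne_of_gt hr0), Real.rpow_one]
    _ ≤ ((n : ℝ) ^ (r - 1) * ∑ a, f a ^ r) ^ ((1:ℝ)/r) :=
        Real.rpow_le_rpow (by positivity) hpow (by positivity)
    _ = (n : ℝ) ^ (((r : ℝ) - 1) / r) * (∑ a, f a ^ r) ^ ((1 : ℝ) / r) := by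
        rw [Real.mul_rpow (by positivity) ht]
        congr 1
        rw [← Real.rpow_natCast (n:ℝ) (r-1), ← Real.rpow_mul (by positivity)]
        congr 1
        rw [Nat.cast_sub hr]
        push_cast
        ring

/-- The upper bound. -/
private lemma aux_key_bound {r : ℕ} (hr : 2 ≤ r) (m : Fin r → ℕ) (hm : ∀ i, 1 ≤ m i)
    (x : (Σ i : Fin r, Fin (m i)) → ℝ) (hx : ∀ v, 0 ≤ x v)
    (hsum : ∑ v, x v ^ r = 1) :
    (r : ℝ) * ∏ i, ∑ a : Fin (m i), x ⟨i, a⟩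
      ≤ (∏ i, (m i : ℝ)) ^ (((r : ℝ) - 1) / r) := by
  have hr1 : 1 ≤ r := le_trans one_le_two hr
  have hr0 : (0:ℝ) < r := by exact_mod_cast hr1
  set c : ℝ := ((r:ℝ) - 1) / r with hc
  have ht : ∀ i, (0:ℝ) ≤ ∑ a, x ⟨i, a⟩ ^ r :=
    fun i => Finset.sum_nonneg fun a _ => pow_nonneg (hx _) r
  have hsum' : ∑ i, ∑ a : Fin (m i), x ⟨i, a⟩ ^ r = 1 := by
    rw [← hsum, ← Finset.univ_sigma_univ, Finset.sum_sigma]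
  have step2 : ∏ i, ∑ a : Fin (m i), x ⟨i, a⟩
      ≤ (∏ i, (m i : ℝ) ^ c) * ∏ i, (∑ a : Fin (m i), x ⟨i, a⟩ ^ r) ^ ((1:ℝ)/r) := by
    rw [← Finset.prod_mul_distrib]
    exact Finset.prod_le_prod (fun i _ => Finset.sum_nonneg fun a _ => hx _)
      (fun i _ => aux_part_bound hr1 (hm i) _ (fun a => hx _))
  have e2 : ∏ i, (∑ a : Fin (m i), x ⟨i, a⟩ ^ r) ^ ((1:ℝ)/r) ≤ 1 / r := by
    have hw : ∑ _i : Fin r, (1:ℝ)/r = 1 := by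
      rw [Finset.sum_const, Finset.card_univ, Fintype.card_fin, nsmul_eq_mul,
        mul_one_div, div_self (ne_of_gt hr0)]
    have := Real.geom_mean_le_arith_mean_weighted Finset.univ (fun _ => (1:ℝ)/r)
      (fun i => ∑ a : Fin (m i), x ⟨i, a⟩ ^ r) (fun i _ => by positivity) hw
      (fun i _ => ht i)
    calc ∏ i, (∑ a : Fin (m i), x ⟨i, a⟩ ^ r) ^ ((1:ℝ)/r)
        ≤ ∑ i, (1:ℝ)/r * (∑ a : Fin (m i), x ⟨i, a⟩ ^ r) := this
      _ = 1/r := by rw [← Finset.mul_sum, hsum', mul_one]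
  have hm0 : ∀ i, (0:ℝ) ≤ (m i : ℝ) := fun i => Nat.cast_nonneg _
  have e1 : ∏ i, (m i : ℝ) ^ c = (∏ i, (m i : ℝ)) ^ c :=
    Real.finset_prod_rpow Finset.univ _ (fun i _ => hm0 i) c
  have hPc : (0:ℝ) ≤ (∏ i, (m i : ℝ)) ^ c := Real.rpow_nonneg
    (Finset.prod_nonneg fun i _ => hm0 i) c
  calc (r : ℝ) * ∏ i, ∑ a : Fin (m i), x ⟨i, a⟩
      ≤ (r : ℝ) * ((∏ i, (m i : ℝ) ^ c) * ∏ i, (∑ a : Fin (m i), x ⟨i, a⟩ ^ r) ^ ((1:ℝ)/r)) :=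
        mul_le_mul_of_nonneg_left step2 (le_of_lt hr0)
    _ ≤ (r : ℝ) * ((∏ i, (m i : ℝ)) ^ c * (1/r)) := by
        rw [e1]
        exact mul_le_mul_of_nonneg_left (mul_le_mul_of_nonneg_left e2 hPc) (le_of_lt hr0)
    _ = (∏ i, (m i : ℝ)) ^ c := by
        field_simp

/-- The optimizing vector attains the bound. -/
private lemma aux_witness {r : ℕ} (hr : 2 ≤ r) (m : Fin r → ℕ) (hm : ∀ i, 1 ≤ m i) :
    ∃ x : (Σ i : Fin r, Fin (m i)) → ℝ, (∀ v, 0 ≤ x v) ∧ (∑ v, x v ^ r) = 1 ∧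
      (r : ℝ) * ∏ i, ∑ a : Fin (m i), x ⟨i, a⟩ = (∏ i, (m i : ℝ)) ^ (((r : ℝ) - 1) / r) := by
  have hr1 : 1 ≤ r := le_trans one_le_two hr
  have hr0 : (0:ℝ) < r := by exact_mod_cast hr1
  have hm0 : ∀ i, (0:ℝ) < (m i : ℝ) := fun i => by exact_mod_cast hm i
  have hN : (0:ℝ) < ∏ i, (m i : ℝ) := Finset.prod_pos fun i _ => hm0 i
  refine ⟨fun v => ((r : ℝ) * m v.1) ^ (-(1:ℝ)/r), fun v => Real.rpow_nonneg (by positivity) _,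
    ?_, ?_⟩
  · have hterm : ∀ i : Fin r, (((r : ℝ) * m i) ^ (-(1:ℝ)/r)) ^ r = ((r:ℝ) * m i)⁻¹ := by
      intro i
      rw [← Real.rpow_natCast (((r : ℝ) * m i) ^ (-(1:ℝ)/r)) r,
        ← Real.rpow_mul (by positivity)]
      rw [show (-(1:ℝ)/r) * r = -1 by field_simp, Real.rpow_neg_one]
    rw [← Finset.univ_sigma_univ, Finset.sum_sigma]
    simp only [hterm]
    have : ∀ i : Fin r, ∑ _a : Fin (m i), ((r:ℝ) * m i)⁻¹ = 1/r := by
      intro i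
      rw [Finset.sum_const, Finset.card_univ, Fintype.card_fin, nsmul_eq_mul, mul_inv,
        mul_comm (r:ℝ)⁻¹ _, ← mul_assoc, mul_inv_cancel₀ (ne_of_gt (hm0 i)), one_mul, one_div]
    rw [Finset.sum_congr rfl (fun i _ => this i), Finset.sum_const, Finset.card_univ,
      Fintype.card_fin, nsmul_eq_mul, mul_one_div, div_self (ne_of_gt hr0)]
  · have hSi : ∀ i : Fin r, ∑ _a : Fin (m i), ((r : ℝ) * m i) ^ (-(1:ℝ)/r)
        = (m i : ℝ) * ((r : ℝ) * m i) ^ (-(1:ℝ)/r) := by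
      intro i
      rw [Finset.sum_const, Finset.card_univ, Fintype.card_fin, nsmul_eq_mul]
    simp only [hSi]
    rw [Finset.prod_mul_distrib]
    rw [(Real.finset_prod_rpow Finset.univ (fun i => (r:ℝ) * m i)
      (fun i _ => by positivity) (-(1:ℝ)/r))]
    have hprod : ∏ i : Fin r, (r:ℝ) * (m i : ℝ) = (r:ℝ) ^ r * ∏ i, (m i : ℝ) := by
      rw [Finset.prod_mul_distrib, Finset.prod_const, Finset.card_univ, Fintype.card_fin]
    rw [hprod, Real.mul_rpow (by positivity) (le_of_lt hN)]
    have hrr : ((r:ℝ) ^ r) ^ (-(1:ℝ)/r) = (r:ℝ)⁻¹ := by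
      rw [← Real.rpow_natCast (r:ℝ) r, ← Real.rpow_mul (le_of_lt hr0)]
      rw [show (r:ℝ) * (-(1:ℝ)/r) = -1 by field_simp, Real.rpow_neg_one]
    rw [hrr]
    rw [show (r:ℝ) * ((∏ i, (m i:ℝ)) * ((r:ℝ)⁻¹ * (∏ i, (m i:ℝ)) ^ (-(1:ℝ)/r)))
      = (∏ i, (m i:ℝ)) ^ (1:ℝ) * (∏ i, (m i:ℝ)) ^ (-(1:ℝ)/r) by
        rw [Real.rpow_one]; field_simp]
    rw [← Real.rpow_add hN]
    congr 1
    field_simp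
    ring

theorem stmt_4 (r : ℕ) (hr : 2 ≤ r) (m : Fin r → ℕ) (hm : ∀ i, 1 ≤ m i) :
    cliqueSpecRad (SimpleGraph.completeMultipartiteGraph (fun i : Fin r => Fin (m i))) r
      = (∏ i, (m i : ℝ)) ^ (((r : ℝ) - 1) / r) := by
  classical
  set V := (∏ i, (m i : ℝ)) ^ (((r : ℝ) - 1) / r) with hV
  set S := { y : ℝ | ∃ x : (Σ i : Fin r, Fin (m i)) → ℝ, (∀ v, 0 ≤ x v) ∧
      (∑ v, x v ^ r) = 1 ∧
      y = r * ∑ K ∈ rCliques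
        (SimpleGraph.completeMultipartiteGraph (fun i : Fin r => Fin (m i))) r,
        ∏ i ∈ K, x i } with hS
  have hub : ∀ y ∈ S, y ≤ V := by
    rintro y ⟨x, hx, hsum, rfl⟩
    rw [aux_clique_sum m x]
    exact aux_key_bound hr m hm x hx hsum
  have hmem : V ∈ S := by
    obtain ⟨x, hx, hsum, hval⟩ := aux_witness hr m hm
    exact ⟨x, hx, hsum, by rw [aux_clique_sum m x, hval]⟩
  exact le_antisymm (csSup_le ⟨V, hmem⟩ hub) (le_csSup ⟨V, hub⟩ hmem)
end

section
/- Let r ≥ 2 and n ≥ r. Among all complete r-partite graphs H on n vertices with r nonempty parts, the r-clique spectral radius ρ_r(H) is maximal precisely for the r-partite Turán graph T_r(n); that is, ρ_r(H) ≤ ρ_r(T_r(n)) for every such H, with equality if and only if H is isomorphic to T_r(n). -/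
/-!
The `r`-cliques of a complete `r`-partite graph with parts `V₁, …, Vᵣ` are exactly its
transversals, so its clique form is `∏ᵢ ∑_{a ∈ Vᵢ} x_a`. The power-mean inequality inside each
part and AM-GM across the parts bound this by `(∏ᵢ |Vᵢ|) ^ ((r - 1) / r) / r` on the unit
`ℓ^r`-sphere, with equality for `x` equal to `(r |Vᵢ|) ^ (-1 / r)` on `Vᵢ`; hence
`ρ_r = (∏ᵢ |Vᵢ|) ^ ((r - 1) / r)`. It remains to maximize `∏ᵢ mᵢ` over positive compositions
of `n`: moving one unit from a part to a part smaller by at least two strictly increases the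
product, so maximizers are balanced, and a balanced composition is unique up to permutation,
namely the part sizes of `T_r(n)`.
-/

open Finset

lemma SimpleGraph.Iso.isNClique_map_iff {V W : Type*} {G : SimpleGraph V} {G' : SimpleGraph W}
    (e : G ≃g G') {r : ℕ} {K : Finset V} :
    G'.IsNClique r (K.map e.toEquiv.toEmbedding) ↔ G.IsNClique r K := by
  rw [SimpleGraph.isNClique_iff, SimpleGraph.isNClique_iff, SimpleGraph.IsClique,
    SimpleGraph.IsClique, coe_map, card_map, e.toEquiv.toEmbedding.injective.injOn.pairwise_image]
  congr!
  exact funext₂ fun _ _ => propext e.map_adj_iff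

section CliqueSpecRad

variable {V W : Type*} [Fintype V] [DecidableEq V] [Fintype W] [DecidableEq W]
  {G : SimpleGraph V} {G' : SimpleGraph W} {r : ℕ}

lemma mem_rCliques {K : Finset V} : K ∈ rCliques G r ↔ G.IsNClique r K := by
  simp [rCliques]

lemma SimpleGraph.Iso.rCliques_eq_map (e : G ≃g G') :
    rCliques G' r = (rCliques G r).map e.toEquiv.finsetCongr.toEmbedding := by
  ext K
  rw [mem_map_equiv, mem_rCliques, mem_rCliques, Equiv.finsetCongr_symm, Equiv.finsetCongr_apply,
    ← e.symm.isNClique_map_iff]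
  rfl

lemma SimpleGraph.Iso.sum_rCliques_prod (e : G ≃g G') (x : W → ℝ) :
    ∑ K ∈ rCliques G' r, ∏ v ∈ K, x v = ∑ K ∈ rCliques G r, ∏ v ∈ K, x (e v) := by
  rw [e.rCliques_eq_map, sum_map]
  simp

lemma cliqueSpecRad_congr (e : G ≃g G') : cliqueSpecRad G r = cliqueSpecRad G' r := by
  unfold cliqueSpecRad
  congr 1
  ext y
  constructor
  · rintro ⟨x, hx0, hx1, rfl⟩
    refine ⟨x ∘ e.symm, fun w => hx0 _, (e.symm.toEquiv.sum_comp _).trans hx1, ?_⟩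
    simp [e.sum_rCliques_prod]
  · rintro ⟨x, hx0, hx1, rfl⟩
    exact ⟨x ∘ e, fun v => hx0 _, (e.toEquiv.sum_comp _).trans hx1,
      by rw [e.sum_rCliques_prod]; rfl⟩

lemma cliqueSpecRad_eq_of_forall_le_of_exists_eq {ρ : ℝ}
    (hle : ∀ x : V → ℝ, (∀ v, 0 ≤ x v) → ∑ v, x v ^ r = 1 →
      r * ∑ K ∈ rCliques G r, ∏ v ∈ K, x v ≤ ρ)
    (hattain : ∃ x : V → ℝ, (∀ v, 0 ≤ x v) ∧ ∑ v, x v ^ r = 1 ∧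
      r * ∑ K ∈ rCliques G r, ∏ v ∈ K, x v = ρ) :
    cliqueSpecRad G r = ρ := by
  obtain ⟨x, hx0, hx1, hx⟩ := hattain
  refine IsGreatest.csSup_eq ⟨⟨x, hx0, hx1, hx.symm⟩, ?_⟩
  rintro _ ⟨y, hy0, hy1, rfl⟩
  exact hle y hy0 hy1

end CliqueSpecRad

lemma Real.prod_le_sum_div_card_pow {ι : Type*} [Fintype ι] [Nonempty ι] {z : ι → ℝ}
    (hz : ∀ i, 0 ≤ z i) : ∏ i, z i ≤ ((∑ i, z i) / Fintype.card ι) ^ Fintype.card ι := by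
  have hr : (Fintype.card ι : ℝ) ≠ 0 := by positivity
  have amgm : ∏ i, z i ^ (Fintype.card ι : ℝ)⁻¹ ≤ ∑ i, (Fintype.card ι : ℝ)⁻¹ * z i :=
    Real.geom_mean_le_arith_mean_weighted univ _ z (fun _ _ => by positivity)
      (by simp [card_univ, hr]) fun i _ => hz i
  rw [Real.finsetProd_rpow _ _ fun i _ => hz i, ← mul_sum, inv_mul_eq_div] at amgm
  calc ∏ i, z i = ((∏ i, z i) ^ (Fintype.card ι : ℝ)⁻¹) ^ Fintype.card ι :=
        (Real.rpow_inv_natCast_pow (prod_nonneg fun i _ => hz i) Fintype.card_ne_zero).symm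
    _ ≤ _ := pow_le_pow_left₀ (Real.rpow_nonneg (prod_nonneg fun i _ => hz i) _) amgm _

section SigmaSums

variable {ι : Type*} [Fintype ι] [Nonempty ι] {V : ι → Type*} [∀ i, Fintype (V i)]

lemma mul_prod_sum_pow_le_prod_card_pow {x : (Σ i, V i) → ℝ} (hx0 : ∀ v, 0 ≤ x v)
    (hx1 : ∑ v, x v ^ Fintype.card ι = 1) :
    (Fintype.card ι * ∏ i, ∑ a, x ⟨i, a⟩) ^ Fintype.card ι ≤
      (∏ i, (Fintype.card (V i) : ℝ)) ^ (Fintype.card ι - 1) := by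
  set r := Fintype.card ι with hr_def
  have hr : r - 1 + 1 = r := Nat.sub_add_cancel Fintype.card_pos
  set T : ι → ℝ := fun i => ∑ a, x ⟨i, a⟩ ^ r
  have hT0 : ∀ i, 0 ≤ T i := fun i => sum_nonneg fun a _ => pow_nonneg (hx0 _) _
  have hT1 : ∑ i, T i = 1 := by rw [← hx1, Fintype.sum_sigma]
  have hpart : ∀ i, (∑ a, x ⟨i, a⟩) ^ r ≤ (Fintype.card (V i) : ℝ) ^ (r - 1) * T i := fun i => by
    have := pow_sum_le_card_mul_sum_pow (s := univ) (fun a _ => hx0 ⟨i, a⟩) (r - 1)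
    rwa [hr, card_univ] at this
  have hamgm : (r : ℝ) ^ r * ∏ i, T i ≤ 1 := by
    have := Real.prod_le_sum_div_card_pow hT0
    rw [hT1, div_pow, one_pow, ← hr_def, le_div_iff₀ (by positivity)] at this
    linarith
  calc (r * ∏ i, ∑ a, x ⟨i, a⟩) ^ r = r ^ r * ∏ i, (∑ a, x ⟨i, a⟩) ^ r := by
        rw [mul_pow, prod_pow]
    _ ≤ r ^ r * ∏ i, ((Fintype.card (V i) : ℝ) ^ (r - 1) * T i) := by
        gcongr with i
        · exact fun i _ => pow_nonneg (sum_nonneg fun a _ => hx0 _) _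
        · exact hpart i
    _ = (∏ i, (Fintype.card (V i) : ℝ)) ^ (r - 1) * (r ^ r * ∏ i, T i) := by
        rw [prod_mul_distrib, prod_pow]; ring
    _ ≤ (∏ i, (Fintype.card (V i) : ℝ)) ^ (r - 1) := by
        have : 0 ≤ (∏ i, (Fintype.card (V i) : ℝ)) ^ (r - 1) := by positivity
        nlinarith

lemma exists_mul_prod_sum_pow_eq_prod_card_pow [∀ i, Nonempty (V i)] :
    ∃ x : (Σ i, V i) → ℝ, (∀ v, 0 ≤ x v) ∧ ∑ v, x v ^ Fintype.card ι = 1 ∧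
      (Fintype.card ι * ∏ i, ∑ a, x ⟨i, a⟩) ^ Fintype.card ι =
        (∏ i, (Fintype.card (V i) : ℝ)) ^ (Fintype.card ι - 1) := by
  set r := Fintype.card ι with hr_def
  have hr : (r : ℝ) ≠ 0 := by positivity
  have hr0 : r ≠ 0 := Fintype.card_ne_zero
  set M : ι → ℝ := fun i => Fintype.card (V i)
  have hM : ∀ i, M i ≠ 0 := fun i => by positivity
  set c : ι → ℝ := fun i => ((r : ℝ) * M i)⁻¹ ^ ((r : ℝ)⁻¹)
  have hc : ∀ i, c i ^ r = ((r : ℝ) * M i)⁻¹ := fun i =>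
    Real.rpow_inv_natCast_pow (by positivity) hr0
  refine ⟨fun v => c v.1, fun v => by positivity, ?_, ?_⟩
  · rw [Fintype.sum_sigma]
    simp only [hc, sum_const, card_univ, nsmul_eq_mul]
    rw [sum_congr rfl fun i _ => show M i * ((r : ℝ) * M i)⁻¹ = (r : ℝ)⁻¹ by field_simp [hM i]]
    simp [card_univ, ← hr_def, hr]
  · have hterm : ∀ i, (M i * c i) ^ r = M i ^ (r - 1) * (r : ℝ)⁻¹ := fun i => by
      rw [mul_pow, hc, ← pow_sub_one_mul hr0 (M i)]
      field_simp [hM i]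
    calc ((r : ℝ) * ∏ i, ∑ _a : V i, c i) ^ r = r ^ r * ∏ i, (M i * c i) ^ r := by
          simp only [sum_const, card_univ, nsmul_eq_mul]
          rw [mul_pow, ← prod_pow]
      _ = (∏ i, M i) ^ (r - 1) := by
          rw [prod_congr rfl fun i _ => hterm i, prod_mul_distrib, prod_const, card_univ,
            ← hr_def, prod_pow, inv_pow]
          field_simp

end SigmaSums

lemma Sigma.mk_apply_injective {ι : Type*} {V : ι → Type*} (s : ∀ i, V i) :
    Function.Injective fun i => (⟨i, s i⟩ : Σ i, V i) :=
  fun _ _ h => congrArg Sigma.fst h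

section CompleteMultipartite

open SimpleGraph

variable {ι : Type*} [Fintype ι] [DecidableEq ι] {V : ι → Type*} [∀ i, DecidableEq (V i)]

lemma isNClique_completeMultipartiteGraph_iff {K : Finset (Σ i, V i)} :
    (completeMultipartiteGraph V).IsNClique (Fintype.card ι) K ↔
      ∃ s : ∀ i, V i, univ.image (fun i => (⟨i, s i⟩ : Σ i, V i)) = K := by
  constructor
  · rintro ⟨hclique, hcard⟩
    have hinj : Set.InjOn Sigma.fst (K : Set (Σ i, V i)) := fun u hu v hv huv =>
      by_contra fun hne => hclique hu hv hne huv
    have hfst : K.image Sigma.fst = univ :=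
      eq_univ_of_card _ (by rw [card_image_of_injOn hinj, hcard])
    have hpart : ∀ i, ∃ a, (⟨i, a⟩ : Σ i, V i) ∈ K := fun i => by
      obtain ⟨⟨j, a⟩, ha, rfl⟩ := mem_image.1 (hfst ▸ mem_univ i)
      exact ⟨a, ha⟩
    choose s hs using hpart
    refine ⟨s, eq_of_subset_of_card_le (image_subset_iff.2 fun i _ => hs i) ?_⟩
    rw [hcard, card_image_of_injective _ (Sigma.mk_apply_injective s), card_univ]
  · rintro ⟨s, rfl⟩
    refine ⟨?_, by rw [card_image_of_injective _ (Sigma.mk_apply_injective s), card_univ]⟩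
    simp only [IsClique, coe_image, coe_univ, Set.image_univ]
    rintro _ ⟨i, rfl⟩ _ ⟨j, rfl⟩ hne
    exact fun hij => hne (by rw [show i = j from hij])

variable [∀ i, Fintype (V i)]

lemma sum_rCliques_completeMultipartiteGraph (x : (Σ i, V i) → ℝ) :
    ∑ K ∈ rCliques (completeMultipartiteGraph V) (Fintype.card ι), ∏ v ∈ K, x v =
      ∏ i, ∑ a, x ⟨i, a⟩ := by
  have himage : rCliques (completeMultipartiteGraph V) (Fintype.card ι) =
      univ.image fun s : (∀ i, V i) => univ.image fun i => (⟨i, s i⟩ : Σ i, V i) := by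
    ext K
    simp [mem_rCliques, isNClique_completeMultipartiteGraph_iff]
  have hinj : Function.Injective
      fun s : (∀ i, V i) => univ.image fun i => (⟨i, s i⟩ : Σ i, V i) := by
    intro s t hst
    simp only at hst
    funext i
    have hi : (⟨i, s i⟩ : Σ i, V i) ∈ univ.image fun i => (⟨i, t i⟩ : Σ i, V i) := by
      rw [← hst]
      exact mem_image_of_mem _ (mem_univ i)
    obtain ⟨j, -, hj⟩ := mem_image.1 hi
    obtain ⟨rfl, h⟩ := Sigma.mk.inj_iff.1 hj
    exact (eq_of_heq h).symm
  rw [himage, sum_image fun s _ t _ h => hinj h, Fintype.prod_sum]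
  refine sum_congr rfl fun s _ => ?_
  rw [prod_image fun i _ j _ h => Sigma.mk_apply_injective s h]

variable [Nonempty ι] [∀ i, Nonempty (V i)]

theorem cliqueSpecRad_completeMultipartiteGraph :
    cliqueSpecRad (completeMultipartiteGraph V) (Fintype.card ι) =
      (∏ i, (Fintype.card (V i) : ℝ)) ^ (((Fintype.card ι : ℝ) - 1) / Fintype.card ι) := by
  set r := Fintype.card ι
  set P := ∏ i, (Fintype.card (V i) : ℝ)
  have hr0 : r ≠ 0 := Fintype.card_ne_zero
  have hP0 : 0 ≤ P := by positivity
  have hρ0 : 0 ≤ P ^ (((r : ℝ) - 1) / r) := by positivity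
  have hρ : (P ^ (((r : ℝ) - 1) / r)) ^ r = P ^ (r - 1) := by
    rw [← Real.rpow_natCast, ← Real.rpow_mul hP0, div_mul_cancel₀ _ (by positivity),
      ← Real.rpow_natCast, Nat.cast_pred Fintype.card_pos]
  have hval_nonneg : ∀ x : (Σ i, V i) → ℝ, (∀ v, 0 ≤ x v) →
      0 ≤ (r : ℝ) * ∏ i, ∑ a, x ⟨i, a⟩ := fun x hx0 =>
    mul_nonneg r.cast_nonneg (prod_nonneg fun i _ => sum_nonneg fun a _ => hx0 ⟨i, a⟩)
  apply cliqueSpecRad_eq_of_forall_le_of_exists_eq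
  · intro x hx0 hx1
    rw [sum_rCliques_completeMultipartiteGraph, ← pow_le_pow_iff_left₀ (hval_nonneg x hx0) hρ0 hr0,
      hρ]
    exact mul_prod_sum_pow_le_prod_card_pow hx0 hx1
  · obtain ⟨x, hx0, hx1, hx⟩ := exists_mul_prod_sum_pow_eq_prod_card_pow (V := V)
    refine ⟨x, hx0, hx1, ?_⟩
    rw [sum_rCliques_completeMultipartiteGraph,
      ← pow_left_inj₀ (hval_nonneg x hx0) hρ0 hr0, hρ, hx]

end CompleteMultipartite

def IsBalanced {ι : Type*} (m : ι → ℕ) : Prop := ∀ i j, m i ≤ m j + 1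

lemma card_filter_eq_sub_card_filter {α : Type*} [Fintype α] {f : α → ℕ} {a b : ℕ} (hab : a ≠ b)
    (hf : ∀ x, f x = a ∨ f x = b) : #{x | f x = a} = Fintype.card α - #{x | f x = b} := by
  rw [← card_univ, ← card_filter_add_card_filter_not (s := univ) (fun x => f x = b),
    Nat.add_sub_cancel_left]
  exact congrArg card (filter_congr fun x _ => by rcases hf x with h | h <;> simp [h, hab, hab.symm])

namespace IsBalanced

variable {ι κ : Type*} [Fintype ι] [Fintype κ] {m : ι → ℕ} {m' : κ → ℕ}

lemma eq_div_or_eq_div_add_one_and_card (hm : IsBalanced m) :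
    (∀ i, m i = (∑ i, m i) / Fintype.card ι ∨ m i = (∑ i, m i) / Fintype.card ι + 1) ∧
      #{i | m i = (∑ i, m i) / Fintype.card ι + 1} = (∑ i, m i) % Fintype.card ι := by
  cases isEmpty_or_nonempty ι
  · simp
  obtain ⟨i₀, -, hmin⟩ := exists_min_image univ m univ_nonempty
  have hvals : ∀ i, m i = m i₀ ∨ m i = m i₀ + 1 := fun i => by
    have := hmin i (mem_univ i); have := hm i i₀; omega
  have hlt : #{i | m i = m i₀ + 1} < Fintype.card ι :=
    card_lt_card (filter_ssubset.2 ⟨i₀, mem_univ _, by omega⟩)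
  have hsum : ∑ i, m i = #{i | m i = m i₀ + 1} + Fintype.card ι * m i₀ := by
    rw [card_filter, ← card_univ, ← smul_eq_mul, ← sum_const, ← sum_add_distrib]
    refine sum_congr rfl fun i _ => ?_
    rcases hvals i with h | h <;> simp [h, add_comm]
  obtain ⟨hdiv, hmod⟩ := (Nat.div_mod_unique Fintype.card_pos).2 ⟨hsum.symm, hlt⟩
  rw [hdiv, hmod]
  exact ⟨hvals, rfl⟩

lemma card_fiber_eq (hm : IsBalanced m) (hm' : IsBalanced m')
    (hcard : Fintype.card ι = Fintype.card κ) (hsum : ∑ i, m i = ∑ j, m' j) (v : ℕ) :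
    #{i | m i = v} = #{j | m' j = v} := by
  obtain ⟨hvals, hlarge⟩ := hm.eq_div_or_eq_div_add_one_and_card
  obtain ⟨hvals', hlarge'⟩ := hm'.eq_div_or_eq_div_add_one_and_card
  rw [hcard, hsum] at hvals hlarge
  set q := (∑ j, m' j) / Fintype.card κ
  by_cases hv : v = q + 1
  · rw [hv, hlarge, hlarge']
  by_cases hv' : v = q
  · rw [hv', card_filter_eq_sub_card_filter (by omega) hvals,
      card_filter_eq_sub_card_filter (by omega) hvals', hlarge, hlarge', hcard]
  · rw [filter_false_of_mem fun i _ => by rcases hvals i with h | h <;> omega,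
      filter_false_of_mem fun j _ => by rcases hvals' j with h | h <;> omega]
    rfl

lemma exists_equiv (hm : IsBalanced m) (hm' : IsBalanced m')
    (hcard : Fintype.card ι = Fintype.card κ) (hsum : ∑ i, m i = ∑ j, m' j) :
    ∃ e : ι ≃ κ, ∀ i, m' (e i) = m i := by
  have hfiber : ∀ v, Fintype.card {i // m i = v} = Fintype.card {j // m' j = v} := fun v => by
    rw [Fintype.card_subtype, Fintype.card_subtype, hm.card_fiber_eq hm' hcard hsum]
  exact ⟨Equiv.ofFiberEquiv fun v => Fintype.equivOfCardEq (hfiber v), Equiv.ofFiberEquiv_map _⟩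

end IsBalanced

section ProdMax

variable {ι : Type*} [Fintype ι]

lemma exists_prod_lt_of_not_isBalanced {m : ι → ℕ} (hpos : ∀ i, 0 < m i) (hm : ¬IsBalanced m) :
    ∃ m' : ι → ℕ, (∀ i, 0 < m' i) ∧ ∑ i, m' i = ∑ i, m i ∧ ∏ i, m i < ∏ i, m' i := by
  classical
  simp only [IsBalanced, not_forall, not_le] at hm
  obtain ⟨i, j, hij⟩ := hm
  have hne : i ≠ j := by rintro rfl; omega
  set m' := Function.update (Function.update m i (m i - 1)) j (m j + 1)
  have hm'i : m' i = m i - 1 := by simp [m', hne]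
  have hm'j : m' j = m j + 1 := by simp [m']
  have hrest : ∀ k ∈ ({i, j} : Finset ι)ᶜ, m' k = m k := fun k hk => by
    simp only [mem_compl, mem_insert, mem_singleton, not_or] at hk
    simp [m', hk.1, hk.2]
  refine ⟨m', fun k => ?_, ?_, ?_⟩
  · by_cases hki : k = i
    · rw [hki, hm'i]; omega
    by_cases hkj : k = j
    · rw [hkj, hm'j]; omega
    · exact hrest k (by simp [hki, hkj]) ▸ hpos k
  · rw [← sum_add_sum_compl {i, j} m', ← sum_add_sum_compl {i, j} m, sum_congr rfl hrest,
      sum_pair hne, sum_pair hne, hm'i, hm'j]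
    congr 1
    omega
  · rw [← prod_mul_prod_compl {i, j} m, ← prod_mul_prod_compl {i, j} m', prod_congr rfl hrest,
      prod_pair hne, prod_pair hne, hm'i, hm'j]
    have hpair : m i * m j < (m i - 1) * (m j + 1) := by
      obtain ⟨c, hc⟩ := Nat.exists_eq_add_of_lt hij
      rw [hc, Nat.add_sub_cancel]
      nlinarith
    exact Nat.mul_lt_mul_of_pos_right hpair (prod_pos fun k _ => hpos k)

lemma isBalanced_of_forall_prod_le {m : ι → ℕ} (hpos : ∀ i, 0 < m i)
    (hmax : ∀ m' : ι → ℕ, (∀ i, 0 < m' i) → ∑ i, m' i = ∑ i, m i → ∏ i, m' i ≤ ∏ i, m i) :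
    IsBalanced m := by
  by_contra hm
  obtain ⟨m', hpos', hsum, hlt⟩ := exists_prod_lt_of_not_isBalanced hpos hm
  exact (hmax m' hpos' hsum).not_gt hlt

lemma exists_forall_prod_le {m : ι → ℕ} (hpos : ∀ i, 0 < m i) :
    ∃ μ : ι → ℕ, (∀ i, 0 < μ i) ∧ ∑ i, μ i = ∑ i, m i ∧
      ∀ m' : ι → ℕ, (∀ i, 0 < m' i) → ∑ i, m' i = ∑ i, m i → ∏ i, m' i ≤ ∏ i, μ i := by
  set S := {μ : ι → ℕ | (∀ i, 0 < μ i) ∧ ∑ i, μ i = ∑ i, m i}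
  have hfin : S.Finite := (Set.Finite.pi fun _ => Set.finite_Iic (∑ i, m i)).subset
    fun μ hμ i _ => hμ.2 ▸ single_le_sum (fun j _ => Nat.zero_le (μ j)) (mem_univ i)
  obtain ⟨μ, hμ, hmax⟩ := Set.exists_max_image S (fun μ => ∏ i, μ i) hfin ⟨m, hpos, rfl⟩
  exact ⟨μ, hμ.1, hμ.2, fun m' hpos' hsum' => hmax m' ⟨hpos', hsum'⟩⟩

theorem IsBalanced.prod_le {m t : ι → ℕ} (ht : IsBalanced t) (hpos : ∀ i, 0 < m i)
    (hsum : ∑ i, m i = ∑ i, t i) : ∏ i, m i ≤ ∏ i, t i := by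
  obtain ⟨μ, hμpos, hμsum, hμmax⟩ := exists_forall_prod_le hpos
  have hμ : IsBalanced μ :=
    isBalanced_of_forall_prod_le hμpos fun m' hpos' hsum' => hμmax m' hpos' (hsum'.trans hμsum)
  obtain ⟨e, he⟩ := hμ.exists_equiv ht rfl (hμsum.trans hsum)
  calc ∏ i, m i ≤ ∏ i, μ i := hμmax m hpos rfl
    _ = ∏ i, t i := by rw [← e.prod_comp t]; simp only [he]

theorem IsBalanced.of_prod_eq {m t : ι → ℕ} (ht : IsBalanced t) (hpos : ∀ i, 0 < m i)
    (hsum : ∑ i, m i = ∑ i, t i) (hprod : ∏ i, m i = ∏ i, t i) : IsBalanced m :=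
  isBalanced_of_forall_prod_le hpos fun _ hpos' hsum' =>
    hprod ▸ ht.prod_le hpos' (hsum'.trans hsum)

end ProdMax

def SimpleGraph.Iso.completeMultipartiteGraph {ι κ : Type*} {V : ι → Type*} {W : κ → Type*}
    (e : ι ≃ κ) (f : ∀ i, V i ≃ W (e i)) :
    SimpleGraph.completeMultipartiteGraph V ≃g SimpleGraph.completeMultipartiteGraph W where
  toEquiv := e.sigmaCongr f
  map_rel_iff' := e.injective.ne_iff

section Turan

open SimpleGraph

abbrev turanPart (n r : ℕ) (i : Fin r) : Type := {v : Fin n // (v : ℕ) % r = i}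

variable {n r : ℕ}

def turanGraphIsoCompleteMultipartiteGraph (hr : 0 < r) :
    turanGraph n r ≃g completeMultipartiteGraph (turanPart n r) where
  toFun v := ⟨⟨v % r, Nat.mod_lt _ hr⟩, v, rfl⟩
  invFun p := p.2
  left_inv _ := rfl
  right_inv := fun ⟨_, _, hv⟩ => Sigma.subtype_ext (Fin.ext hv) rfl
  map_rel_iff' := by simp [turanGraph_adj, Fin.ext_iff]

lemma card_turanPart (hr : 0 < r) (i : Fin r) :
    Fintype.card (turanPart n r i) = n / r + if (i : ℕ) < n % r then 1 else 0 := by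
  have hi : (i : ℕ) % r = i := Nat.mod_eq_of_lt i.2
  have hcount := Nat.count_modEq_card n hr i
  rw [hi, Nat.count_eq_card_fintype] at hcount
  rw [← hcount, Fintype.card_eq_nat_card, Fintype.card_eq_nat_card]
  exact Nat.card_congr
    { toFun := fun v => ⟨v.1, v.1.2, v.2.trans hi.symm⟩
      invFun := fun k => ⟨⟨k.1, k.2.1⟩, Eq.trans k.2.2 hi⟩ }

lemma isBalanced_card_turanPart (hr : 0 < r) :
    IsBalanced fun i => Fintype.card (turanPart n r i) := fun i j => by
  simp only [card_turanPart hr]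
  split_ifs <;> omega

lemma sum_card_turanPart (hr : 0 < r) : ∑ i, Fintype.card (turanPart n r i) = n := by
  rw [← Fintype.card_sigma]
  exact (Fintype.card_congr (turanGraphIsoCompleteMultipartiteGraph hr).toEquiv).symm.trans
    (Fintype.card_fin n)

lemma nonempty_turanPart (hr : 0 < r) (hn : r ≤ n) (i : Fin r) : Nonempty (turanPart n r i) := by
  rw [← Fintype.card_pos_iff, card_turanPart hr]
  have := (Nat.one_le_div_iff hr).2 hn
  omega

lemma cliqueSpecRad_turanGraph (hr : 0 < r) (hn : r ≤ n) :
    cliqueSpecRad (turanGraph n r) r =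
      (∏ i, (Fintype.card (turanPart n r i) : ℝ)) ^ (((r : ℝ) - 1) / r) := by
  have : NeZero r := ⟨hr.ne'⟩
  have := nonempty_turanPart hr hn
  simpa [cliqueSpecRad_congr (turanGraphIsoCompleteMultipartiteGraph hr)] using
    cliqueSpecRad_completeMultipartiteGraph (V := turanPart n r)

lemma nonempty_iso_turanGraph_of_isBalanced (hr : 0 < r) {m : Fin r → ℕ} (hm : IsBalanced m)
    (hsum : ∑ i, m i = n) :
    Nonempty (completeMultipartiteGraph (fun i => Fin (m i)) ≃g turanGraph n r) := by
  obtain ⟨σ, hσ⟩ := hm.exists_equiv (isBalanced_card_turanPart hr) rfl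
    (hsum.trans (sum_card_turanPart hr).symm)
  exact ⟨(Iso.completeMultipartiteGraph σ fun i =>
    Fintype.equivOfCardEq ((Fintype.card_fin _).trans (hσ i).symm)).trans
      (turanGraphIsoCompleteMultipartiteGraph hr).symm⟩

end Turan

theorem stmt_5 (r n : ℕ) (hr : 2 ≤ r) (hn : r ≤ n) (H : SimpleGraph (Fin n))
    (hH : ∃ m : Fin r → ℕ, (∀ i, 1 ≤ m i) ∧ (∑ i, m i) = n ∧
      Nonempty (H ≃g SimpleGraph.completeMultipartiteGraph (fun i : Fin r => Fin (m i)))) :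
    cliqueSpecRad H r ≤ cliqueSpecRad (SimpleGraph.turanGraph n r) r ∧
      (cliqueSpecRad H r = cliqueSpecRad (SimpleGraph.turanGraph n r) r ↔
        Nonempty (H ≃g SimpleGraph.turanGraph n r)) := by
  obtain ⟨m, hm_pos, hm_sum, ⟨e⟩⟩ := hH
  have hr0 : 0 < r := by omega
  have : NeZero r := ⟨hr0.ne'⟩
  have : ∀ i, Nonempty (Fin (m i)) := fun i => Fin.pos_iff_nonempty.1 (hm_pos i)
  have hα : 0 < ((r : ℝ) - 1) / r := div_pos (by norm_num; omega) (by positivity)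
  have hρH : cliqueSpecRad H r = (∏ i, (m i : ℝ)) ^ (((r : ℝ) - 1) / r) := by
    simpa [cliqueSpecRad_congr e] using
      cliqueSpecRad_completeMultipartiteGraph (V := fun i : Fin r => Fin (m i))
  have ht := isBalanced_card_turanPart (n := n) hr0
  have hsum : ∑ i, m i = ∑ i, Fintype.card (turanPart n r i) :=
    hm_sum.trans (sum_card_turanPart hr0).symm
  have hρT := cliqueSpecRad_turanGraph hr0 hn
  refine ⟨?_, fun heq => ?_, fun ⟨f⟩ => cliqueSpecRad_congr f⟩
  · rw [hρH, hρT]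
    exact Real.rpow_le_rpow (by positivity) (by exact_mod_cast ht.prod_le hm_pos hsum) hα.le
  · rw [hρH, hρT, Real.rpow_left_inj (by positivity) (by positivity) hα.ne'] at heq
    exact (nonempty_iso_turanGraph_of_isBalanced hr0
      (ht.of_prod_eq hm_pos hsum (by exact_mod_cast heq)) hm_sum).map e.trans
end

section
/- Let r ≥ 2 and let G be a K_{r+1}-free graph on n vertices. Then the number of r-cliques of G satisfies c_r(G) ≤ ⌊(n/r)·(∏_{s=0}^{r-1} ⌊(n+s)/r⌋)^{(r-1)/r}⌋, i.e., c_r(G) ≤ ⌊(n/r)·ρ_r(T_r(n))⌋. -/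
open Finset

/-!
Zykov's theorem: a `K_{r+1}`-free graph on `n` vertices has at most as many `r`-cliques as the
Turán graph `T_r(n)`, namely `∏ i < r, ⌊(n + i) / r⌋`. Induct on `r` and on the vertex set: if
every vertex missed fewer than `⌈n / r⌉` vertices, a greedy choice would produce a `K_{r+1}`; so
some vertex has at most `n - ⌈n / r⌉` neighbours, its cliques are `(r - 1)`-cliques of its
`K_r`-free neighbourhood, and the Turán counts satisfy the matching recurrence. Since the part
sizes sum to `n`, AM-GM bounds their product `P` by `(n / r) ^ r`, i.e. `P ≤ (n / r) · P^((r-1)/r)`.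
-/

namespace Nat

lemma sum_range_add_div (r n : ℕ) (hr : 0 < r) : ∑ i ∈ range r, (n + i) / r = n := by
  induction n with
  | zero => exact sum_eq_zero fun i hi => Nat.div_eq_of_lt (by simpa using hi)
  | succ n ih =>
    have h := sum_range_succ' (fun i => (n + i) / r) r
    rw [sum_range_succ, ih, Nat.add_div_right n hr] at h
    simp only [add_zero] at h
    have : ∑ i ∈ range r, (n + 1 + i) / r = ∑ i ∈ range r, (n + (i + 1)) / r :=
      sum_congr rfl fun i _ => by rw [add_right_comm, add_assoc]
    omega

/-- With `(m + r) / (r + 1) = ⌈m / (r + 1)⌉`: removing a largest part from `T_{r+1}(m)`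
leaves `T_r(m - ⌈m / (r + 1)⌉)`. -/
lemma sub_add_div_succ_eq {r m i : ℕ} (hi : i < r) :
    (m - (m + r) / (r + 1) + i) / r = (m + i) / (r + 1) := by
  obtain ⟨q, t, ht, rfl⟩ : ∃ q t, t < r + 1 ∧ m = t + (r + 1) * q :=
    ⟨m / (r + 1), m % (r + 1), Nat.mod_lt _ (by omega), (Nat.mod_add_div m (r + 1)).symm⟩
  have hr : 0 < r := by omega
  rw [show t + (r + 1) * q + r = t + r + (r + 1) * q by ring,
    show t + (r + 1) * q + i = t + i + (r + 1) * q by ring,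
    Nat.add_mul_div_left _ _ (by omega), Nat.add_mul_div_left _ _ (by omega)]
  rcases Nat.eq_zero_or_pos t with rfl | ht0
  · rw [Nat.div_eq_of_lt (show 0 + r < r + 1 by omega),
      show 0 + (r + 1) * q - (0 + q) + i = i + r * q by ring_nf; omega,
      Nat.add_mul_div_left _ _ hr, Nat.div_eq_of_lt hi, Nat.div_eq_of_lt (by omega)]
  · rw [Nat.div_eq_of_lt_le (show 1 * (r + 1) ≤ t + r by omega) (by omega),
      show t + (r + 1) * q - (1 + q) + i = t - 1 + i + r * q by ring_nf; omega,
      Nat.add_mul_div_left _ _ hr]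
    rcases Nat.lt_or_ge (t + i) (r + 1) with hc | hc
    · rw [Nat.div_eq_of_lt (by omega), Nat.div_eq_of_lt hc]
    · rw [Nat.div_eq_of_lt_le (show 1 * r ≤ t - 1 + i by omega) (by omega),
        Nat.div_eq_of_lt_le (show 1 * (r + 1) ≤ t + i by omega) (by omega)]

end Nat

/-- The number of `r`-cliques of the Turán graph `T_r(m)`, whose parts have sizes
`(m + i) / r` for `i < r`. -/
def turanCliqueCount (r m : ℕ) : ℕ := ∏ i ∈ range r, (m + i) / r

lemma turanCliqueCount_mono (r : ℕ) : Monotone (turanCliqueCount r) :=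
  fun _ _ h => prod_le_prod' fun _ _ => Nat.div_le_div_right (by omega)

/-- `T_{r+1}(m+1)` is `T_{r+1}(m)` with a smallest part enlarged by one vertex, which lies in as
many cliques as the other `r` parts span. -/
lemma turanCliqueCount_succ_succ (r m : ℕ) :
    turanCliqueCount (r + 1) (m + 1) =
      turanCliqueCount r (m + 1 - (m + 1 + r) / (r + 1)) + turanCliqueCount (r + 1) m := by
  set Q := ∏ i ∈ range r, (m + 1 + i) / (r + 1)
  have hQ : turanCliqueCount r (m + 1 - (m + 1 + r) / (r + 1)) = Q :=
    prod_congr rfl fun i hi => Nat.sub_add_div_succ_eq (mem_range.1 hi)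
  have hlast : (m + 1 + r) / (r + 1) = m / (r + 1) + 1 := by
    rw [show m + 1 + r = m + (r + 1) by ring, Nat.add_div_right m (by omega)]
  have hfirst : turanCliqueCount (r + 1) m = m / (r + 1) * Q := by
    rw [turanCliqueCount, prod_range_succ', add_zero, mul_comm]
    congr 1
    exact prod_congr rfl fun i _ => by rw [add_assoc, add_comm 1 i]
  rw [hQ, hfirst, turanCliqueCount, prod_range_succ, hlast]
  ring

namespace SimpleGraph
variable {V : Type*} [DecidableEq V] (G : SimpleGraph V) [DecidableRel G.Adj]

lemma exists_isNClique_of_card_filter_not_adj_le {s : Finset V} {d : ℕ}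
    (hd : ∀ v ∈ s, #{w ∈ s | ¬G.Adj v w} ≤ d) (k : ℕ) (hk : k * d < #s) :
    ∃ K ⊆ s, G.IsNClique (k + 1) K := by
  induction k generalizing s with
  | zero =>
    obtain ⟨v, hv⟩ := card_pos.1 (by omega : 0 < #s)
    exact ⟨{v}, by simpa using hv, by simp⟩
  | succ k ih =>
    obtain ⟨v, hv⟩ := card_pos.1 (by omega : 0 < #s)
    have hsplit : #{w ∈ s | G.Adj v w} + #{w ∈ s | ¬G.Adj v w} = #s :=
      card_filter_add_card_filter_not _
    have hsub : {w ∈ s | G.Adj v w} ⊆ s := filter_subset _ _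
    obtain ⟨K, hK, hKc⟩ := ih (s := {w ∈ s | G.Adj v w})
      (fun u hu => (card_le_card (filter_subset_filter _ hsub)).trans (hd u (hsub hu)))
      (by have := hd v hv; rw [add_mul] at hk; omega)
    exact ⟨insert v K, insert_subset hv (hK.trans hsub),
      hKc.insert fun w hw => (mem_filter.1 (hK hw)).2⟩

lemma CliqueFreeOn.exists_le_mul_card_filter_not_adj {s : Finset V} {r : ℕ} (hs : s.Nonempty)
    (h : G.CliqueFreeOn s (r + 2)) : ∃ v ∈ s, #s ≤ (r + 1) * #{w ∈ s | ¬G.Adj v w} := by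
  obtain ⟨v, hv, hmax⟩ := s.exists_max_image (fun v => #{w ∈ s | ¬G.Adj v w}) hs
  refine ⟨v, hv, not_lt.1 fun hlt => ?_⟩
  obtain ⟨K, hK, hKc⟩ := G.exists_isNClique_of_card_filter_not_adj_le hmax (r + 1) hlt
  exact h (coe_subset.2 hK) hKc

variable [Fintype V]

lemma card_cliques_subset_le_add (s : Finset V) (v : V) (r : ℕ) :
    #{K ∈ G.cliqueFinset (r + 1) | K ⊆ s} ≤
      #{K ∈ G.cliqueFinset r | K ⊆ {w ∈ s | G.Adj v w}} +
        #{K ∈ G.cliqueFinset (r + 1) | K ⊆ s.erase v} := by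
  rw [← card_filter_add_card_filter_not (p := fun K => v ∈ K)]
  gcongr ?_ + ?_
  · refine card_le_card_of_injOn (fun K => K.erase v) (fun K hK => ?_)
      ((erase_injOn' v).mono fun K hK => (mem_filter.1 hK).2)
    simp only [mem_coe, mem_filter, mem_cliqueFinset_iff] at hK ⊢
    obtain ⟨⟨hKc, hKs⟩, hvK⟩ := hK
    refine ⟨hKc.erase_of_mem hvK, fun w hw => mem_filter.2 ⟨hKs (mem_of_mem_erase hw), ?_⟩⟩
    exact hKc.1 hvK (mem_of_mem_erase hw) (ne_of_mem_erase hw).symm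
  · refine card_le_card fun K hK => ?_
    simp only [mem_filter, subset_erase] at hK ⊢
    exact ⟨hK.1.1, hK.1.2, hK.2⟩

theorem card_cliques_subset_le_turanCliqueCount (r : ℕ) {s : Finset V}
    (h : G.CliqueFreeOn s (r + 1)) : #{K ∈ G.cliqueFinset r | K ⊆ s} ≤ turanCliqueCount r #s := by
  induction r generalizing s with
  | zero =>
    refine card_le_one.2 fun K hK L hL => ?_
    simp only [mem_filter, mem_cliqueFinset_iff, isNClique_zero] at hK hL
    rw [hK.1, hL.1]
  | succ r ih =>
    induction s using strongInduction with
    | H s ihs =>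
    rcases s.eq_empty_or_nonempty with rfl | hs
    · simp [subset_empty, filter_eq', isNClique_empty]
    obtain ⟨v, hv, hnonadj⟩ := h.exists_le_mul_card_filter_not_adj G hs
    obtain ⟨m, hm⟩ : ∃ m, #s = m + 1 := Nat.exists_eq_add_one.2 hs.card_pos
    have hnbr : #{w ∈ s | G.Adj v w} ≤ m + 1 - (m + 1 + r) / (r + 1) := by
      have : #{w ∈ s | G.Adj v w} + #{w ∈ s | ¬G.Adj v w} = #s :=
        card_filter_add_card_filter_not _
      have : (m + 1 + r) / (r + 1) ≤ #{w ∈ s | ¬G.Adj v w} := by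
        rw [Nat.div_le_iff_le_mul_add_pred (by omega)]
        omega
      omega
    calc #{K ∈ G.cliqueFinset (r + 1) | K ⊆ s}
        ≤ #{K ∈ G.cliqueFinset r | K ⊆ {w ∈ s | G.Adj v w}} +
            #{K ∈ G.cliqueFinset (r + 1) | K ⊆ s.erase v} :=
          G.card_cliques_subset_le_add s v r
      _ ≤ turanCliqueCount r #{w ∈ s | G.Adj v w} + turanCliqueCount (r + 1) #(s.erase v) :=
          add_le_add (ih (by simpa [Set.inter_def] using h.of_succ G hv))
            (ihs _ (erase_ssubset hv) (h.subset G (by simp)))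
      _ ≤ turanCliqueCount r (m + 1 - (m + 1 + r) / (r + 1)) + turanCliqueCount (r + 1) m := by
          rw [card_erase_of_mem hv, hm, Nat.add_sub_cancel]
          gcongr
          exact turanCliqueCount_mono r hnbr
      _ = turanCliqueCount (r + 1) #s := by rw [hm, turanCliqueCount_succ_succ]

end SimpleGraph

lemma turanCliqueCount_le_mul_rpow (r n : ℕ) (hr : 0 < r) :
    (turanCliqueCount r n : ℝ) ≤ n / r * (turanCliqueCount r n : ℝ) ^ (((r : ℝ) - 1) / r) := by
  have hr' : (0 : ℝ) < r := Nat.cast_pos.2 hr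
  have hamgm : (turanCliqueCount r n : ℝ) ^ ((1 : ℝ) / r) ≤ n / r :=
    calc (turanCliqueCount r n : ℝ) ^ ((1 : ℝ) / r)
        = ∏ i ∈ range r, (((n + i) / r : ℕ) : ℝ) ^ ((1 : ℝ) / r) := by
          rw [turanCliqueCount, Nat.cast_prod, Real.finsetProd_rpow _ _ fun _ _ => by positivity]
      _ ≤ ∑ i ∈ range r, (1 : ℝ) / r * (((n + i) / r : ℕ) : ℝ) :=
          Real.geom_mean_le_arith_mean_weighted _ _ _ (fun _ _ => by positivity)
            (by rw [sum_const, card_range, nsmul_eq_mul]; field_simp) fun _ _ => by positivity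
      _ = n / r := by rw [← mul_sum, ← Nat.cast_sum, Nat.sum_range_add_div r n hr]; ring
  have hexp : (1 : ℝ) / r + (r - 1) / r = 1 := by field_simp; ring
  calc (turanCliqueCount r n : ℝ)
      = (turanCliqueCount r n : ℝ) ^ ((1 : ℝ) / r) *
          (turanCliqueCount r n : ℝ) ^ (((r : ℝ) - 1) / r) := by
        rw [← Real.rpow_add' (by positivity) (by rw [hexp]; exact one_ne_zero), hexp, Real.rpow_one]
    _ ≤ n / r * (turanCliqueCount r n : ℝ) ^ (((r : ℝ) - 1) / r) := by gcongr

theorem stmt_9 (r n : ℕ) (hr : 2 ≤ r) (G : SimpleGraph (Fin n))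
    (hfree : G.CliqueFree (r + 1)) :
    ((rCliques G r).card : ℤ) ≤
      ⌊((n : ℝ) / r) *
        ((∏ s ∈ Finset.range r, ((n + s) / r) : ℕ) : ℝ) ^ (((r : ℝ) - 1) / r)⌋ := by
  classical
  have hcount : #(rCliques G r) ≤ turanCliqueCount r n := by
    have hall : rCliques G r = {K ∈ G.cliqueFinset r | K ⊆ univ} := by
      ext K
      simp [rCliques]
    simpa [hall] using G.card_cliques_subset_le_turanCliqueCount r (s := univ)
      (by simpa using hfree)
  rw [Int.le_floor]
  exact_mod_cast (Nat.cast_le.2 hcount).trans (turanCliqueCount_le_mul_rpow r n (by omega))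
end

section
/- Let G be a triangle-free graph on n vertices. Then the spectral radius of the adjacency matrix of G satisfies ρ(G) ≤ √(⌊n/2⌋·⌈n/2⌉), with equality if and only if G is isomorphic to the complete bipartite graph T_2(n) with part sizes ⌊n/2⌋ and ⌈n/2⌉. -/
/-!
If `A x = μ x` and `|x u|` is maximal, then `μ² x u = ∑_{w ∼ u} ∑_{v ∼ w} x v`, so
`μ² ≤ ∑_{w ∼ u} deg w`. In a triangle-free graph the stars centred at the neighbours of `u` are
edge-disjoint, so this sum is at most the number of edges `m`, and Mantel's theorem (Turán's
theorem for `r = 2`) gives `m ≤ ⌊n/2⌋⌈n/2⌉`. Equality in the spectral bound forces equality in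
Mantel's theorem, where Turán's theorem identifies the extremal graph. Conversely `K_{a,b}` has the
eigenvalue `√(ab)`, with eigenvector `√b` on the part of size `a` and `√a` on the other part.
-/

open Finset

/-- The spectral radius of the adjacency matrix of `G`: the supremum of the absolute
values of the (real) eigenvalues of the adjacency matrix. -/
noncomputable def adjSpecRad {n : ℕ} (G : SimpleGraph (Fin n)) [DecidableRel G.Adj] : ℝ :=
  sSup { t : ℝ | ∃ μ ∈ spectrum ℝ (G.adjMatrix ℝ), t = |μ| }

open scoped Matrix

def finEquivSumFinHalf (n : ℕ) : Fin n ≃ Fin (n / 2) ⊕ Fin ((n + 1) / 2) where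
  toFun i := if h : i.val % 2 = 1 then .inl ⟨i / 2, by omega⟩ else .inr ⟨i / 2, by omega⟩
  invFun := Sum.elim (fun j => ⟨2 * j + 1, by omega⟩) (fun j => ⟨2 * j, by omega⟩)
  left_inv i := by
    dsimp only
    split_ifs <;> ext <;> simp only [Sum.elim_inl, Sum.elim_inr] <;> omega
  right_inv := by
    rintro (j | j) <;> simp [Nat.mul_add_div]

namespace Matrix

variable {K ι : Type*} [Field K] [Fintype ι] [DecidableEq ι]

theorem mem_spectrum_iff_exists_mulVec_eq_smul {A : Matrix ι ι K} {μ : K} :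
    μ ∈ spectrum K A ↔ ∃ x : ι → K, x ≠ 0 ∧ A *ᵥ x = μ • x := by
  rw [← spectrum_toLin', ← Module.End.hasEigenvalue_iff_mem_spectrum,
    Module.End.hasEigenvalue_iff, Submodule.ne_bot_iff]
  simp only [Module.End.mem_eigenspace_iff, toLin'_apply]
  exact ⟨fun ⟨x, hx, hx0⟩ => ⟨x, hx0, hx⟩, fun ⟨x, hx0, hx⟩ => ⟨x, hx, hx0⟩⟩

end Matrix

namespace SimpleGraph

instance completeBipartiteGraph.decidableAdj (α β : Type*) :
    DecidableRel (completeBipartiteGraph α β).Adj :=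
  fun _ _ => inferInstanceAs (Decidable (_ ∨ _))

theorem card_edgeFinset_completeBipartiteGraph (α β : Type*) [Fintype α] [Fintype β] :
    #(completeBipartiteGraph α β).edgeFinset = Fintype.card α * Fintype.card β := by
  have h := encard_edgeSet_completeBipartiteGraph (W₁ := α) (W₂ := β)
  rw [← coe_edgeFinset, Set.encard_coe_eq_coe_finsetCard, ENat.card_eq_coe_fintype_card,
    ENat.card_eq_coe_fintype_card] at h
  exact_mod_cast h

def turanGraphTwoIso (n : ℕ) :
    turanGraph n 2 ≃g completeBipartiteGraph (Fin (n / 2)) (Fin ((n + 1) / 2)) where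
  toEquiv := finEquivSumFinHalf n
  map_rel_iff' {i j} := by
    simp only [finEquivSumFinHalf, Equiv.coe_fn_mk, turanGraph_adj]
    split_ifs <;>
      simp only [completeBipartiteGraph_adj, Sum.isLeft_inl, Sum.isLeft_inr, Sum.isRight_inl,
        Sum.isRight_inr, Bool.false_eq_true, and_self, and_true, and_false, or_self, or_true,
        or_false, ne_eq, true_iff, false_iff, Decidable.not_not] <;> omega

section Extremal

variable {V : Type*} [Fintype V] {G : SimpleGraph V} [DecidableRel G.Adj]

theorem CliqueFree.card_edgeFinset_le_div_two_mul (hG : G.CliqueFree 3) :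
    #G.edgeFinset ≤ Fintype.card V / 2 * ((Fintype.card V + 1) / 2) := by
  obtain ⟨H, _, hH⟩ := exists_isTuranMaximal (V := V) two_pos
  obtain ⟨f⟩ := hH.nonempty_iso_turanGraph
  calc #G.edgeFinset ≤ #H.edgeFinset := hH.2 hG
    _ = _ := by
      rw [((turanGraphTwoIso _).comp f).card_edgeFinset_eq,
        card_edgeFinset_completeBipartiteGraph, Fintype.card_fin, Fintype.card_fin]

theorem CliqueFree.nonempty_iso_completeBipartiteGraph (hG : G.CliqueFree 3)
    (hE : #G.edgeFinset = Fintype.card V / 2 * ((Fintype.card V + 1) / 2)) :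
    Nonempty (G ≃g completeBipartiteGraph (Fin (Fintype.card V / 2))
      (Fin ((Fintype.card V + 1) / 2))) := by
  have hG' : G.IsTuranMaximal 2 :=
    ⟨hG, fun H _ hH => hE ▸ hH.card_edgeFinset_le_div_two_mul⟩
  obtain ⟨f⟩ := hG'.nonempty_iso_turanGraph
  exact ⟨(turanGraphTwoIso _).comp f⟩

end Extremal

section Spectrum

variable {V W : Type*} [Fintype V] [DecidableEq V] {G : SimpleGraph V} [DecidableRel G.Adj]

theorem Iso.spectrum_adjMatrix_eq [Fintype W] [DecidableEq W] {H : SimpleGraph W}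
    [DecidableRel H.Adj] (f : G ≃g H) :
    spectrum ℝ (H.adjMatrix ℝ) = spectrum ℝ (G.adjMatrix ℝ) := by
  rw [← f.reindex_adjMatrix ℝ]
  exact AlgEquiv.spectrum_eq (Matrix.reindexAlgEquiv ℝ ℝ f.toEquiv) _

theorem adjMatrix_completeBipartiteGraph_mulVec_inl {R : Type*} [NonAssocSemiring R]
    {α β : Type*} [Fintype α] [Fintype β] (x : α ⊕ β → R) (i : α) :
    ((completeBipartiteGraph α β).adjMatrix R *ᵥ x) (.inl i) = ∑ j, x (.inr j) := by
  simp [Matrix.mulVec, dotProduct, Fintype.sum_sum_type, adjMatrix_apply]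

theorem adjMatrix_completeBipartiteGraph_mulVec_inr {R : Type*} [NonAssocSemiring R]
    {α β : Type*} [Fintype α] [Fintype β] (x : α ⊕ β → R) (j : β) :
    ((completeBipartiteGraph α β).adjMatrix R *ᵥ x) (.inr j) = ∑ i, x (.inl i) := by
  simp [Matrix.mulVec, dotProduct, Fintype.sum_sum_type, adjMatrix_apply]

theorem sqrt_card_mul_card_mem_spectrum_adjMatrix_completeBipartiteGraph (α β : Type*)
    [Fintype α] [Fintype β] [DecidableEq α] [DecidableEq β] [Nonempty α] [Nonempty β] :
    √(Fintype.card α * Fintype.card β : ℝ) ∈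
      spectrum ℝ ((completeBipartiteGraph α β).adjMatrix ℝ) := by
  have ha : (0 : ℝ) ≤ Fintype.card α := Nat.cast_nonneg _
  have hb : (0 : ℝ) ≤ Fintype.card β := Nat.cast_nonneg _
  rw [Matrix.mem_spectrum_iff_exists_mulVec_eq_smul]
  refine ⟨Sum.elim (fun _ => √(Fintype.card β)) (fun _ => √(Fintype.card α)), fun h => ?_, ?_⟩
  · simpa using congrFun h (Sum.inl (Classical.arbitrary α))
  · ext (i | j) <;>
      simp only [adjMatrix_completeBipartiteGraph_mulVec_inl,
        adjMatrix_completeBipartiteGraph_mulVec_inr, Sum.elim_inl, Sum.elim_inr, sum_const,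
        card_univ, nsmul_eq_mul, Pi.smul_apply, smul_eq_mul, Real.sqrt_mul ha]
    · linear_combination -√(Fintype.card α : ℝ) * Real.mul_self_sqrt hb
    · linear_combination -√(Fintype.card β : ℝ) * Real.mul_self_sqrt ha

theorem CliqueFree.sum_degree_neighborFinset_le (hG : G.CliqueFree 3) (u : V) :
    ∑ w ∈ G.neighborFinset u, G.degree w ≤ #G.edgeFinset := by
  simp_rw [← card_neighborFinset_eq_degree, ← card_sigma]
  refine card_le_card_of_injOn (fun p => s(p.1, p.2)) (fun p hp => ?_) ?_
  · simp only [coe_sigma, Set.mem_sigma_iff, mem_coe, mem_neighborFinset] at hp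
    simpa using hp.2
  · rintro ⟨w, v⟩ hp ⟨w', v'⟩ hp' he
    simp only [coe_sigma, Set.mem_sigma_iff, mem_coe, mem_neighborFinset] at hp hp'
    rcases Sym2.eq_iff.1 he with ⟨rfl, rfl⟩ | ⟨rfl, rfl⟩
    · rfl
    · exact absurd (is3Clique_triple_iff.2 ⟨hp.1, hp'.1, hp.2⟩) (hG {u, w, v})

theorem CliqueFree.sq_le_card_edgeFinset_of_mem_spectrum (hG : G.CliqueFree 3) {μ : ℝ}
    (hμ : μ ∈ spectrum ℝ (G.adjMatrix ℝ)) : μ ^ 2 ≤ #G.edgeFinset := by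
  obtain ⟨x, hx0, hx⟩ := Matrix.mem_spectrum_iff_exists_mulVec_eq_smul.1 hμ
  obtain ⟨v₀, hv₀⟩ := Function.ne_iff.1 hx0
  obtain ⟨u, -, hu⟩ := exists_max_image univ (fun v => |x v|) ⟨v₀, mem_univ v₀⟩
  have hxu : 0 < |x u| := (abs_pos.2 hv₀).trans_le (hu v₀ (mem_univ v₀))
  have hwalks : μ ^ 2 * x u = ∑ w ∈ G.neighborFinset u, ∑ v ∈ G.neighborFinset w, x v := by
    have h : G.adjMatrix ℝ *ᵥ (G.adjMatrix ℝ *ᵥ x) = μ ^ 2 • x := by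
      rw [hx, Matrix.mulVec_smul, hx, smul_smul, sq]
    have hu := congrFun h u
    simp only [adjMatrix_mulVec_apply, Pi.smul_apply, smul_eq_mul] at hu
    exact hu.symm
  refine le_of_mul_le_mul_right ?_ hxu
  calc μ ^ 2 * |x u| = |μ ^ 2 * x u| := by rw [abs_mul, abs_sq]
    _ ≤ ∑ w ∈ G.neighborFinset u, ∑ v ∈ G.neighborFinset w, |x v| := by
      rw [hwalks]
      exact (abs_sum_le_sum_abs _ _).trans (sum_le_sum fun _ _ => abs_sum_le_sum_abs _ _)
    _ ≤ ∑ w ∈ G.neighborFinset u, ∑ v ∈ G.neighborFinset w, |x u| :=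
      sum_le_sum fun w _ => sum_le_sum fun v _ => hu v (mem_univ v)
    _ = ((∑ w ∈ G.neighborFinset u, G.degree w : ℕ) : ℝ) * |x u| := by
      simp [sum_mul]
    _ ≤ #G.edgeFinset * |x u| := by
      gcongr
      exact hG.sum_degree_neighborFinset_le u

end Spectrum

section AdjSpecRad

variable {n : ℕ} {G : SimpleGraph (Fin n)} [DecidableRel G.Adj]

theorem adjSpecRad_nonneg : 0 ≤ adjSpecRad G :=
  Real.sSup_nonneg (by rintro t ⟨μ, -, rfl⟩; exact abs_nonneg μ)

theorem abs_le_adjSpecRad {μ : ℝ} (hμ : μ ∈ spectrum ℝ (G.adjMatrix ℝ)) :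
    |μ| ≤ adjSpecRad G := by
  have hbdd : BddAbove { t : ℝ | ∃ μ ∈ spectrum ℝ (G.adjMatrix ℝ), t = |μ| } := by
    refine ((Matrix.finite_spectrum (G.adjMatrix ℝ)).image (|·|)).bddAbove.mono ?_
    rintro t ⟨μ, hμ, rfl⟩
    exact ⟨μ, hμ, rfl⟩
  exact le_csSup hbdd ⟨μ, hμ, rfl⟩

theorem CliqueFree.adjSpecRad_le_sqrt_card_edgeFinset (hG : G.CliqueFree 3) :
    adjSpecRad G ≤ √(#G.edgeFinset) := by
  refine Real.sSup_le ?_ (Real.sqrt_nonneg _)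
  rintro t ⟨μ, hμ, rfl⟩
  rw [← Real.sqrt_sq_eq_abs]
  exact Real.sqrt_le_sqrt (hG.sq_le_card_edgeFinset_of_mem_spectrum hμ)

theorem Iso.sqrt_card_mul_card_le_adjSpecRad {α β : Type*} [Fintype α] [Fintype β]
    [DecidableEq α] [DecidableEq β] (f : G ≃g completeBipartiteGraph α β) :
    √(Fintype.card α * Fintype.card β : ℝ) ≤ adjSpecRad G := by
  cases isEmpty_or_nonempty α
  · simpa using adjSpecRad_nonneg
  cases isEmpty_or_nonempty β
  · simpa using adjSpecRad_nonneg
  have hμ := sqrt_card_mul_card_mem_spectrum_adjMatrix_completeBipartiteGraph α β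
  rw [f.spectrum_adjMatrix_eq] at hμ
  simpa [abs_of_nonneg] using abs_le_adjSpecRad hμ

end AdjSpecRad

end SimpleGraph

theorem stmt_12 (n : ℕ) (G : SimpleGraph (Fin n)) [DecidableRel G.Adj]
    (hfree : G.CliqueFree 3) :
    adjSpecRad G ≤ Real.sqrt (((n / 2 : ℕ) : ℝ) * (((n + 1) / 2 : ℕ) : ℝ)) ∧
      (adjSpecRad G = Real.sqrt (((n / 2 : ℕ) : ℝ) * (((n + 1) / 2 : ℕ) : ℝ)) ↔
        Nonempty (G ≃g completeBipartiteGraph (Fin (n / 2)) (Fin ((n + 1) / 2)))) := by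
  have hρE := hfree.adjSpecRad_le_sqrt_card_edgeFinset
  have hmantel : #G.edgeFinset ≤ n / 2 * ((n + 1) / 2) := by
    simpa using hfree.card_edgeFinset_le_div_two_mul
  have hle : adjSpecRad G ≤ √(((n / 2 : ℕ) : ℝ) * (((n + 1) / 2 : ℕ) : ℝ)) :=
    hρE.trans (Real.sqrt_le_sqrt (by exact_mod_cast hmantel))
  refine ⟨hle, fun heq => ?_, fun ⟨f⟩ => le_antisymm hle ?_⟩
  · have hE : #G.edgeFinset = n / 2 * ((n + 1) / 2) := by
      refine le_antisymm hmantel ?_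
      have h := (Real.sqrt_le_sqrt_iff (Nat.cast_nonneg _)).1 (heq ▸ hρE)
      exact_mod_cast h
    have h := hfree.nonempty_iso_completeBipartiteGraph (by rwa [Fintype.card_fin])
    rwa [Fintype.card_fin] at h
  · simpa using f.sqrt_card_mul_card_le_adjSpecRad
end
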